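/- Let M be the (n+m)×(n+m) symmetric block matrix M = [[A, B],[B', 0]], where A ∈ ℝ^{n×n} is positive definite and B ∈ ℝ^{n×m}. Then the smallest eigenvalue of M satisfies σ_min(M) ≥ (1/2)(σ_min(A) − sqrt(σ_min(A)² + 4·s_max(B)²)), where σ_min(A) is the smallest eigenvalue of A and s_max(B) is the largest singular value of B. -/

import Mathlib

open Matrix BigOperators MeasureTheory ProbabilityTheory

/-- The singular values of a real matrix `A`, defined as the square roots of the
eigenvalues of `Aᴴ * A` (not sorted). -/
noncomputable def singularValues {N T : ℕ} (A : Matrix (Fin N) (Fin T) ℝ) : Fin T → ℝ :=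
  fun j => Real.sqrt ((show (Aᵀ * A).IsHermitian by
    simpa [Matrix.conjTranspose_eq_transpose_of_trivial] using
      Matrix.isHermitian_conjTranspose_mul_self A).eigenvalues j)

/-- The nuclear norm of a real matrix: the sum of its singular values. -/
noncomputable def nuclearNorm {N T : ℕ} (A : Matrix (Fin N) (Fin T) ℝ) : ℝ :=
  ∑ j, singularValues A j

/-- The Frobenius norm of a real matrix. -/
noncomputable def frobNorm {N T : ℕ} (A : Matrix (Fin N) (Fin T) ℝ) : ℝ :=
  Real.sqrt (∑ i, ∑ j, (A i j)^2)

/-- The operator (spectral) norm of a real matrix: its largest singular value. -/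
noncomputable def opNorm {N T : ℕ} (A : Matrix (Fin N) (Fin T) ℝ) : ℝ :=
  ⨆ j, singularValues A j

/-! A negative eigenvalue `μ` of `M` with eigenvector `(x, y)` satisfies `A x + B y = μ x` and
`Bᵀ x = μ y`, so `x ≠ 0` and `μ² ‖x‖² = μ ⟪x, A x⟫ + ‖Bᵀ x‖²`. Since `μ < 0`, the bounds
`⟪x, A x⟫ ≥ σ_min(A) ‖x‖²` and `‖Bᵀ x‖² ≤ s_max(B)² ‖x‖²` give `μ² ≤ μ σ_min(A) + s_max(B)²`,
so `μ` lies above the smaller root of this quadratic. -/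

lemma half_sub_sqrt_le_of_sq_le {a c μ : ℝ} (h : μ ^ 2 ≤ μ * a + c) :
    (1 / 2) * (a - √(a ^ 2 + 4 * c)) ≤ μ := by
  have : (2 * μ - a) ^ 2 ≤ a ^ 2 + 4 * c := by nlinarith
  linarith [Real.neg_sqrt_le_of_sq_le this]

lemma half_sub_sqrt_nonpos (a : ℝ) {c : ℝ} (hc : 0 ≤ c) : (1 / 2) * (a - √(a ^ 2 + 4 * c)) ≤ 0 := by
  linarith [Real.le_sqrt_of_sq_le (show a ^ 2 ≤ a ^ 2 + 4 * c by linarith)]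

namespace Matrix

variable {ι κ : Type*} [Fintype ι] [Fintype κ]

lemma _root_.OrthonormalBasis.dotProduct_eq_sum (b : OrthonormalBasis ι ℝ (EuclideanSpace ℝ ι))
    (x y : ι → ℝ) : x ⬝ᵥ y = ∑ j, (⇑(b j) ⬝ᵥ x) * (⇑(b j) ⬝ᵥ y) := by
  simpa [EuclideanSpace.inner_eq_star_dotProduct, dotProduct_comm] using
    (b.sum_inner_mul_inner (WithLp.toLp 2 x) (WithLp.toLp 2 y)).symm

section Hermitian

variable [DecidableEq ι] {A : Matrix ι ι ℝ} (hA : A.IsHermitian)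

lemma IsHermitian.eigenvectorBasis_dotProduct_mulVec (j : ι) (x : ι → ℝ) :
    ⇑(hA.eigenvectorBasis j) ⬝ᵥ (A *ᵥ x) = hA.eigenvalues j * (⇑(hA.eigenvectorBasis j) ⬝ᵥ x) := by
  have hAt : Aᵀ = A := by simpa [conjTranspose_eq_transpose_of_trivial] using hA.eq
  rw [dotProduct_mulVec, ← mulVec_transpose, hAt, hA.mulVec_eigenvectorBasis,
    smul_dotProduct, smul_eq_mul]

lemma IsHermitian.dotProduct_mulVec_eq_sum (x : ι → ℝ) :
    x ⬝ᵥ (A *ᵥ x) = ∑ j, hA.eigenvalues j * (⇑(hA.eigenvectorBasis j) ⬝ᵥ x) ^ 2 := by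
  rw [hA.eigenvectorBasis.dotProduct_eq_sum]
  refine Finset.sum_congr rfl fun j _ => ?_
  rw [hA.eigenvectorBasis_dotProduct_mulVec]
  ring

lemma IsHermitian.mul_dotProduct_self_le {c : ℝ} (hc : ∀ j, c ≤ hA.eigenvalues j) (x : ι → ℝ) :
    c * (x ⬝ᵥ x) ≤ x ⬝ᵥ (A *ᵥ x) := by
  rw [hA.dotProduct_mulVec_eq_sum, hA.eigenvectorBasis.dotProduct_eq_sum, Finset.mul_sum]
  refine Finset.sum_le_sum fun j _ => ?_
  rw [← sq]
  exact mul_le_mul_of_nonneg_right (hc j) (sq_nonneg _)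

lemma IsHermitian.dotProduct_mulVec_le {c : ℝ} (hc : ∀ j, hA.eigenvalues j ≤ c) (x : ι → ℝ) :
    x ⬝ᵥ (A *ᵥ x) ≤ c * (x ⬝ᵥ x) := by
  rw [hA.dotProduct_mulVec_eq_sum, hA.eigenvectorBasis.dotProduct_eq_sum, Finset.mul_sum]
  refine Finset.sum_le_sum fun j _ => ?_
  rw [← sq]
  exact mul_le_mul_of_nonneg_right (hc j) (sq_nonneg _)

end Hermitian

/-- Cauchy–Schwarz applied to `‖Bᵀ x‖² = ⟪x, B (Bᵀ x)⟫`. -/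
lemma transpose_mulVec_dotProduct_self_le {B : Matrix ι κ ℝ} {c : ℝ} (hc : 0 ≤ c)
    (hB : ∀ u, (B *ᵥ u) ⬝ᵥ (B *ᵥ u) ≤ c * (u ⬝ᵥ u)) (x : ι → ℝ) :
    (Bᵀ *ᵥ x) ⬝ᵥ (Bᵀ *ᵥ x) ≤ c * (x ⬝ᵥ x) := by
  set u := Bᵀ *ᵥ x
  have hux : u ⬝ᵥ u = x ⬝ᵥ (B *ᵥ u) := by rw [dotProduct_mulVec x B u, ← mulVec_transpose]
  have hcs : (x ⬝ᵥ (B *ᵥ u)) ^ 2 ≤ (x ⬝ᵥ x) * ((B *ᵥ u) ⬝ᵥ (B *ᵥ u)) := by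
    simpa only [dotProduct, sq] using Finset.sum_mul_sq_le_sq_mul_sq Finset.univ x (B *ᵥ u)
  have hx : 0 ≤ x ⬝ᵥ x := Finset.sum_nonneg fun i _ => mul_self_nonneg (x i)
  have hu : 0 ≤ u ⬝ᵥ u := Finset.sum_nonneg fun i _ => mul_self_nonneg (u i)
  rcases hu.eq_or_lt with hu | hu
  · rw [← hu]; positivity
  · refine le_of_mul_le_mul_right ?_ hu
    calc u ⬝ᵥ u * (u ⬝ᵥ u) = (x ⬝ᵥ (B *ᵥ u)) ^ 2 := by rw [← hux, sq]
      _ ≤ (x ⬝ᵥ x) * (c * (u ⬝ᵥ u)) := hcs.trans (by gcongr; exact hB u)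
      _ = c * (x ⬝ᵥ x) * (u ⬝ᵥ u) := by ring

lemma mulVec_dotProduct_self_le_opNorm_sq {N T : ℕ} (B : Matrix (Fin N) (Fin T) ℝ)
    (u : Fin T → ℝ) : (B *ᵥ u) ⬝ᵥ (B *ᵥ u) ≤ opNorm B ^ 2 * (u ⬝ᵥ u) := by
  have hBB : (Bᵀ * B).IsHermitian := by
    simpa [conjTranspose_eq_transpose_of_trivial] using isHermitian_conjTranspose_mul_self B
  have heig : ∀ k, hBB.eigenvalues k ≤ opNorm B ^ 2 := fun k => by
    have hle : singularValues B k ≤ opNorm B := le_ciSup (Set.finite_range _).bddAbove k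
    calc hBB.eigenvalues k = singularValues B k ^ 2 :=
          (Real.sq_sqrt (eigenvalues_conjTranspose_mul_self_nonneg B k)).symm
      _ ≤ opNorm B ^ 2 := pow_le_pow_left₀ (Real.sqrt_nonneg _) hle 2
  calc (B *ᵥ u) ⬝ᵥ (B *ᵥ u) = u ⬝ᵥ ((Bᵀ * B) *ᵥ u) := by
        rw [← mulVec_mulVec, dotProduct_mulVec u, vecMul_transpose]
    _ ≤ opNorm B ^ 2 * (u ⬝ᵥ u) := hBB.dotProduct_mulVec_le heig u

lemma transpose_mulVec_dotProduct_self_le_opNorm_sq {N T : ℕ} (B : Matrix (Fin N) (Fin T) ℝ)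
    (x : Fin N → ℝ) : (Bᵀ *ᵥ x) ⬝ᵥ (Bᵀ *ᵥ x) ≤ opNorm B ^ 2 * (x ⬝ᵥ x) :=
  transpose_mulVec_dotProduct_self_le (sq_nonneg _) (mulVec_dotProduct_self_le_opNorm_sq B) x

section BlockEigenvector

variable {A : Matrix ι ι ℝ} {B : Matrix ι κ ℝ} {μ : ℝ}

lemma sq_mul_dotProduct_self_eq {x : ι → ℝ} {y : κ → ℝ} (h₁ : A *ᵥ x + B *ᵥ y = μ • x)
    (h₂ : Bᵀ *ᵥ x = μ • y) :
    μ ^ 2 * (x ⬝ᵥ x) = μ * (x ⬝ᵥ (A *ᵥ x)) + (Bᵀ *ᵥ x) ⬝ᵥ (Bᵀ *ᵥ x) := by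
  have hxBy : x ⬝ᵥ (B *ᵥ y) = μ * (y ⬝ᵥ y) := by
    rw [dotProduct_mulVec, ← mulVec_transpose, h₂, smul_dotProduct, smul_eq_mul]
  have hxAx : x ⬝ᵥ (A *ᵥ x) + x ⬝ᵥ (B *ᵥ y) = μ * (x ⬝ᵥ x) := by
    rw [← dotProduct_add, h₁, dotProduct_smul, smul_eq_mul]
  rw [h₂, smul_dotProduct, dotProduct_smul, smul_eq_mul, smul_eq_mul]
  linear_combination (-μ) * hxAx + μ * hxBy

lemma eq_smul_of_fromBlocks_mulVec_eq_smul {v : ι ⊕ κ → ℝ}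
    (hv : fromBlocks A B Bᵀ 0 *ᵥ v = μ • v) :
    A *ᵥ (v ∘ Sum.inl) + B *ᵥ (v ∘ Sum.inr) = μ • (v ∘ Sum.inl) ∧
      Bᵀ *ᵥ (v ∘ Sum.inl) = μ • (v ∘ Sum.inr) := by
  rw [← Sum.elim_comp_inl_inr v, fromBlocks_mulVec] at hv
  constructor <;> funext j
  · simpa using congrFun hv (Sum.inl j)
  · simpa using congrFun hv (Sum.inr j)

lemma comp_inl_ne_zero_of_fromBlocks_mulVec_eq_smul (hμ : μ ≠ 0) {v : ι ⊕ κ → ℝ} (hv₀ : v ≠ 0)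
    (hv : fromBlocks A B Bᵀ 0 *ᵥ v = μ • v) : v ∘ Sum.inl ≠ 0 := by
  intro hx
  have hy : v ∘ Sum.inr = 0 := by
    have h₂ := (eq_smul_of_fromBlocks_mulVec_eq_smul hv).2
    rw [hx, mulVec_zero] at h₂
    exact (smul_eq_zero.mp h₂.symm).resolve_left hμ
  exact hv₀ (by rw [← Sum.elim_comp_inl_inr v, hx, hy, Sum.elim_zero_zero])

lemma fromBlocks_eigenvalue_sq_le {a c : ℝ} (hA : ∀ x, a * (x ⬝ᵥ x) ≤ x ⬝ᵥ (A *ᵥ x))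
    (hB : ∀ x, (Bᵀ *ᵥ x) ⬝ᵥ (Bᵀ *ᵥ x) ≤ c * (x ⬝ᵥ x)) (hμ : μ < 0) {v : ι ⊕ κ → ℝ} (hv₀ : v ≠ 0)
    (hv : fromBlocks A B Bᵀ 0 *ᵥ v = μ • v) : μ ^ 2 ≤ μ * a + c := by
  obtain ⟨h₁, h₂⟩ := eq_smul_of_fromBlocks_mulVec_eq_smul hv
  set x := v ∘ Sum.inl
  have hx₀ : x ≠ 0 := comp_inl_ne_zero_of_fromBlocks_mulVec_eq_smul hμ.ne hv₀ hv
  have hx : 0 < x ⬝ᵥ x := lt_of_le_of_ne (Finset.sum_nonneg fun i _ => mul_self_nonneg (x i))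
    (Ne.symm (dotProduct_self_eq_zero.not.mpr hx₀))
  refine le_of_mul_le_mul_right ?_ hx
  calc μ ^ 2 * (x ⬝ᵥ x) = μ * (x ⬝ᵥ (A *ᵥ x)) + (Bᵀ *ᵥ x) ⬝ᵥ (Bᵀ *ᵥ x) :=
        sq_mul_dotProduct_self_eq h₁ h₂
    _ ≤ μ * (a * (x ⬝ᵥ x)) + c * (x ⬝ᵥ x) :=
        add_le_add (mul_le_mul_of_nonpos_left (hA x) hμ.le) (hB x)
    _ = (μ * a + c) * (x ⬝ᵥ x) := by ring

end BlockEigenvector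

end Matrix

/-- For the symmetric block matrix `M = [[A, B],[Bᵀ, 0]]` with `A`
positive definite, every eigenvalue of `M` is at least
`(1/2)(σ_min(A) − √(σ_min(A)² + 4 s_max(B)²))`. -/
theorem blockMatrix_eigenvalue_lowerBound {n m : ℕ}
    (A : Matrix (Fin n) (Fin n) ℝ) (B : Matrix (Fin n) (Fin m) ℝ)
    (hA : A.PosDef)
    (hM : (Matrix.fromBlocks A B Bᵀ 0).IsHermitian) :
    ∀ i, (1/2) * ((⨅ j, hA.isHermitian.eigenvalues j) -
        Real.sqrt ((⨅ j, hA.isHermitian.eigenvalues j)^2 + 4 * (⨆ k, singularValues B k)^2))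
      ≤ hM.eigenvalues i := by
  intro i
  rcases le_or_gt 0 (hM.eigenvalues i) with hμ | hμ
  · exact (half_sub_sqrt_nonpos _ (sq_nonneg (opNorm B))).trans hμ
  have hAx := hA.isHermitian.mul_dotProduct_self_le
    (fun j => ciInf_le (Set.finite_range hA.isHermitian.eigenvalues).bddBelow j)
  have hv₀ : ⇑(hM.eigenvectorBasis i) ≠ 0 :=
    (WithLp.ofLp_eq_zero 2).not.mpr (hM.eigenvectorBasis.orthonormal.ne_zero i)
  exact half_sub_sqrt_le_of_sq_le <| fromBlocks_eigenvalue_sq_le hAx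
    (transpose_mulVec_dotProduct_self_le_opNorm_sq B) hμ hv₀ (hM.mulVec_eigenvectorBasis i)
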